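/- Let d ≥ 1, α > 2, and let H ⊆ I(ℝ^d) be nonempty and completely closed in the strong sense. Then 𝔔_α(H) is exactly the class of all Dirac measures δ_γ, γ ∈ ℝ^d. -/

import Mathlib

open MeasureTheory Filter Complex
open scoped InnerProductSpace BoundedContinuousFunction BigOperators Topology

noncomputable section

/-- Euclidean space ℝ^d. -/
abbrev Ed (d : ℕ) := EuclideanSpace ℝ (Fin d)

/-- The characteristic function of a measure on ℝ^d. -/
def charFn {d : ℕ} (μ : Measure (Ed d)) (z : Ed d) : ℂ :=
  ∫ x, Complex.exp ((⟪z, x⟫_ℝ : ℂ) * Complex.I) ∂μ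

/-- n-fold convolution power of a measure. -/
def convPow {d : ℕ} (μ : Measure (Ed d)) : ℕ → Measure (Ed d)
  | 0 => Measure.dirac 0
  | n + 1 => (convPow μ n).conv μ

/-- The class I(ℝ^d) of infinitely divisible probability measures on ℝ^d. -/
def IDiv (d : ℕ) : Set (Measure (Ed d)) :=
  {μ | IsProbabilityMeasure μ ∧
    ∀ n : ℕ, 1 ≤ n → ∃ ν : Measure (Ed d), IsProbabilityMeasure ν ∧ convPow ν n = μ}

open scoped Classical in
/-- The cumulant function C_μ of an infinitely divisible measure μ:
the unique continuous function with C 0 = 0 and μ̂ = exp ∘ C. -/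
def cumulant {d : ℕ} (μ : Measure (Ed d)) : Ed d → ℂ :=
  if h : ∃ C : Ed d → ℂ, Continuous C ∧ C 0 = 0 ∧ ∀ z, charFn μ z = Complex.exp (C z)
  then h.choose else 0

/-- Weak convergence of a sequence of measures to a measure. -/
def WeakTendsto {d : ℕ} (μs : ℕ → Measure (Ed d)) (ν : Measure (Ed d)) : Prop :=
  ∀ f : Ed d →ᵇ ℝ, Tendsto (fun n => ∫ x, f x ∂(μs n)) atTop (𝓝 (∫ x, f x ∂ν))

/-- H is completely closed in the strong sense: closed under convolution, weak convergence
of sequences, type equivalence, and t-th convolution powers for t > 0. -/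
def IsCCSS {d : ℕ} (H : Set (Measure (Ed d))) : Prop :=
  (∀ μ ∈ H, ∀ ν ∈ H, μ.conv ν ∈ H) ∧
  (∀ (μs : ℕ → Measure (Ed d)) (ν : Measure (Ed d)),
      (∀ n, μs n ∈ H) → IsProbabilityMeasure ν → WeakTendsto μs ν → ν ∈ H) ∧
  (∀ μ ∈ H, ∀ a : ℝ, 0 < a → ∀ c : Ed d, μ.map (fun x => a • x + c) ∈ H) ∧
  (∀ μ ∈ H, ∀ t : ℝ, 0 < t → ∀ ν : Measure (Ed d), IsProbabilityMeasure ν →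
      (∀ z, charFn ν z = Complex.exp ((t : ℂ) * cumulant μ z)) → ν ∈ H)

/-- The class 𝔔_α(H). -/
def QOp {d : ℕ} (α : ℝ) (H : Set (Measure (Ed d))) : Set (Measure (Ed d)) :=
  {μ | IsProbabilityMeasure μ ∧
    ∃ (μs : ℕ → Measure (Ed d)) (j0 : ℕ) (a p : ℕ → ℝ) (c : ℕ → Ed d),
      (∀ j, μs j ∈ IDiv d) ∧ (∀ j, j0 ≤ j → μs j ∈ H) ∧
      (∀ n, 0 < a n) ∧ Monotone a ∧ Tendsto a atTop atTop ∧
      Tendsto (fun n => a (n + 1) / a n) atTop (𝓝 1) ∧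
      (∀ n, 0 < p n) ∧ Tendsto (fun n => p n / (a n) ^ α) atTop (𝓝 1) ∧
      ∀ z : Ed d, Tendsto (fun n =>
          (∏ j ∈ Finset.range n,
            Complex.exp ((p n : ℂ) * cumulant (μs j) ((a n)⁻¹ • z)))
            * Complex.exp ((⟪c n, z⟫_ℝ : ℂ) * Complex.I))
        atTop (𝓝 (charFn μ z))}

/-- 𝔔_α^∞(H) = ∩_{m ≥ 1} 𝔔_α^m(H). -/
def QInf {d : ℕ} (α : ℝ) (H : Set (Measure (Ed d))) : Set (Measure (Ed d)) :=
  ⋂ m : ℕ, (QOp α)^[m + 1] H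

/-- The class L^⟨α⟩(ℝ^d) of α-selfdecomposable distributions. -/
def SelfDec (d : ℕ) (α : ℝ) : Set (Measure (Ed d)) :=
  {μ | μ ∈ IDiv d ∧ ∀ b : ℝ, 1 < b → ∃ ρ ∈ IDiv d, ∀ z,
      charFn μ z = Complex.exp (((b ^ α : ℝ) : ℂ) * cumulant μ (b⁻¹ • z)) * charFn ρ z}

/-- The class S_β(ℝ^d) of β-stable distributions. -/
def Stable (d : ℕ) (β : ℝ) : Set (Measure (Ed d)) :=
  {μ | μ ∈ IDiv d ∧ ∀ b : ℝ, 1 < b → ∃ c : Ed d, ∀ z,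
      charFn μ z = Complex.exp (((b ^ β : ℝ) : ℂ) * cumulant μ (b⁻¹ • z)
        + (⟪c, z⟫_ℝ : ℂ) * Complex.I)}

/-- The class S(ℝ^d) of all stable distributions. -/
def StableAll (d : ℕ) : Set (Measure (Ed d)) :=
  ⋃ β ∈ Set.Ioc (0 : ℝ) 2, Stable d β

/-- Gaussian (possibly degenerate multivariate normal) distributions on ℝ^d. -/
def IsGaussianM {d : ℕ} (μ : Measure (Ed d)) : Prop :=
  IsProbabilityMeasure μ ∧
    ∃ A : Matrix (Fin d) (Fin d) ℝ, A.PosSemidef ∧ ∃ γ : Ed d, ∀ z,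
      charFn μ z = Complex.exp (-((∑ i, ∑ j, A i j * z i * z j : ℝ) : ℂ) / 2
        + (⟪γ, z⟫_ℝ : ℂ) * Complex.I)

/-- A class being closed under convolution and weak convergence. -/
def ConvWeakClosed {d : ℕ} (C : Set (Measure (Ed d))) : Prop :=
  (∀ μ ∈ C, ∀ ν ∈ C, μ.conv ν ∈ C) ∧
  (∀ (μs : ℕ → Measure (Ed d)) (ν : Measure (Ed d)),
      (∀ n, μs n ∈ C) → IsProbabilityMeasure ν → WeakTendsto μs ν → ν ∈ C)

/-- The closure K̄ of a class K under convolution and weak convergence: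
the smallest class containing K closed under both. -/
def cwClosure {d : ℕ} (K : Set (Measure (Ed d))) : Set (Measure (Ed d)) :=
  ⋂₀ {C | K ⊆ C ∧ ConvWeakClosed C}

/-- The nested classes L_m^⟨α⟩(ℝ^d) = 𝔔_α^{m+1}(I(ℝ^d)). -/
def Lclass (d : ℕ) (α : ℝ) (m : ℕ) : Set (Measure (Ed d)) :=
  (QOp α)^[m + 1] (IDiv d)

/-- L_∞^⟨α⟩(ℝ^d) = ∩_{m ≥ 0} L_m^⟨α⟩(ℝ^d). -/
def LInf (d : ℕ) (α : ℝ) : Set (Measure (Ed d)) :=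
  ⋂ m : ℕ, Lclass d α m

end

/-!
For `μ ∈ I(ℝ^d)` let `ψ_μ = -Re C_μ`, so that `|μ̂| = exp (-ψ_μ)`. The covariance inequality
`|φ(s+t) - φ(s)φ(t)|² ≤ (1 - |φ(s)|²)(1 - |φ(t)|²)`, applied to the `n`-th convolution roots of
`μ` and letting `n → ∞`, shows that `√ψ_μ` is subadditive.

If `μ ∈ 𝔔_α(H)`, then `|μ̂(z)| = lim exp (-p_n S_n(a_n⁻¹ z))` with `S_n = ∑_{j<n} ψ_{μ_j}`.
Subadditivity gives `|μ̂(m z)| ≥ |μ̂(z)|^{m²}`, so `μ̂` has no zeros and `p_k S_k(a_k⁻¹ z)`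
converges. Comparing the scales `a_n ≤ a_k` then bounds `√(S_n(a_n⁻¹ z))` by a multiple of
`a_k / √p_k`, which tends to `0` because `α > 2`. Hence `|μ̂| ≡ 1`, so `μ ∗ μ(-·) = δ_0` and `μ`
is a Dirac measure. Conversely `δ_0 ∈ H` as a weak limit of contractions of any member of `H`,
and `δ_γ` arises from `μ_j = δ_0` with shifts `c_n = γ`.
-/

open scoped ComplexConjugate

section UnimodularIntegral

variable {Ω : Type*} [MeasurableSpace Ω] {μ : Measure Ω} {u v : Ω → ℂ}

lemma integrable_of_norm_eq_one [IsFiniteMeasure μ] (hu : AEStronglyMeasurable u μ)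
    (hu1 : ∀ x, ‖u x‖ = 1) : Integrable u μ :=
  .of_bound hu 1 (.of_forall fun x => (hu1 x).le)

lemma integral_norm_sub_integral_sq [IsProbabilityMeasure μ] (hu : AEStronglyMeasurable u μ)
    (hu1 : ∀ x, ‖u x‖ = 1) :
    ∫ x, ‖u x - ∫ y, u y ∂μ‖ ^ 2 ∂μ = 1 - ‖∫ y, u y ∂μ‖ ^ 2 := by
  set A := ∫ y, u y ∂μ
  have hint := (integrable_of_norm_eq_one hu hu1).mul_const (conj A)
  have hpt : ∀ x, ‖u x - A‖ ^ 2 = 1 + ‖A‖ ^ 2 - 2 * (u x * conj A).re := fun x => by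
    rw [← Complex.normSq_eq_norm_sq, ← Complex.normSq_eq_norm_sq, Complex.normSq_sub,
      Complex.normSq_eq_norm_sq, hu1]
    ring
  have hre : ∫ x, (u x * conj A).re ∂μ = ‖A‖ ^ 2 := by
    have := integral_re hint
    simp only [RCLike.re_to_complex] at this
    rw [this, integral_mul_const, Complex.mul_conj, Complex.normSq_eq_norm_sq]
    norm_cast
  have hint' : Integrable (fun x => 2 * (u x * conj A).re) μ := hint.re.const_mul 2
  simp_rw [hpt]
  rw [integral_sub (integrable_const _) hint', integral_const_mul, hre]
  simp
  ring

lemma integral_mul_le_sqrt_mul_sqrt {f g : Ω → ℝ} (hf0 : 0 ≤ f) (hg0 : 0 ≤ g) (hf : MemLp f 2 μ)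
    (hg : MemLp g 2 μ) :
    ∫ x, f x * g x ∂μ ≤ √(∫ x, f x ^ 2 ∂μ) * √(∫ x, g x ^ 2 ∂μ) := by
  have := integral_mul_le_Lp_mul_Lq_of_nonneg Real.HolderConjugate.two_two
    (.of_forall hf0) (.of_forall hg0) (by simpa using hf) (by simpa using hg)
  simp only [Real.rpow_two] at this
  rwa [Real.sqrt_eq_rpow, Real.sqrt_eq_rpow]

lemma norm_integral_le_one_of_norm_eq_one [IsProbabilityMeasure μ] (hu1 : ∀ x, ‖u x‖ = 1) :
    ‖∫ x, u x ∂μ‖ ≤ 1 := by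
  simpa using norm_integral_le_of_norm_le_const (μ := μ) (.of_forall fun x => (hu1 x).le)

lemma memLp_norm_sub_integral [IsProbabilityMeasure μ] (hu : AEStronglyMeasurable u μ)
    (hu1 : ∀ x, ‖u x‖ = 1) (p : ENNReal) : MemLp (fun x => ‖u x - ∫ y, u y ∂μ‖) p μ := by
  refine .of_bound (hu.sub aestronglyMeasurable_const).norm 2 (.of_forall fun x => ?_)
  rw [norm_norm]
  linarith [norm_sub_le (u x) (∫ y, u y ∂μ), hu1 x,
    norm_integral_le_one_of_norm_eq_one (μ := μ) hu1]

lemma norm_integral_mul_sub_le [IsProbabilityMeasure μ] (hu : AEStronglyMeasurable u μ)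
    (hv : AEStronglyMeasurable v μ) (hu1 : ∀ x, ‖u x‖ = 1) (hv1 : ∀ x, ‖v x‖ = 1) :
    ‖∫ x, u x * v x ∂μ - (∫ x, u x ∂μ) * ∫ x, v x ∂μ‖
      ≤ √((1 - ‖∫ x, u x ∂μ‖ ^ 2) * (1 - ‖∫ x, v x ∂μ‖ ^ 2)) := by
  set A := ∫ x, u x ∂μ
  set B := ∫ x, v x ∂μ
  have hui := integrable_of_norm_eq_one hu hu1
  have hvi := integrable_of_norm_eq_one hv hv1
  have huvi : Integrable (fun x => u x * v x) μ :=
    integrable_of_norm_eq_one (hu.mul hv) fun x => by rw [norm_mul, hu1, hv1, one_mul]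
  have hcentered : ∫ x, (u x - A) * (v x - B) ∂μ = ∫ x, u x * v x ∂μ - A * B := by
    have hexp : ∀ x, (u x - A) * (v x - B) = u x * v x - A * v x - (u x - A) * B :=
      fun x => by ring
    simp_rw [hexp]
    have i1 : Integrable (fun x => u x * v x - A * v x) μ := huvi.sub (hvi.const_mul A)
    have i2 : Integrable (fun x => (u x - A) * B) μ := (hui.sub (integrable_const A)).mul_const B
    rw [integral_sub i1 i2, integral_sub huvi (hvi.const_mul A), integral_mul_const,
      integral_sub hui (integrable_const A), integral_const_mul]
    simp [A, B]
  have hvar_nonneg : 0 ≤ 1 - ‖A‖ ^ 2 := by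
    rw [← integral_norm_sub_integral_sq hu hu1]
    exact integral_nonneg fun x => by positivity
  calc ‖∫ x, u x * v x ∂μ - A * B‖
      = ‖∫ x, (u x - A) * (v x - B) ∂μ‖ := by rw [hcentered]
    _ ≤ ∫ x, ‖u x - A‖ * ‖v x - B‖ ∂μ :=
      (norm_integral_le_integral_norm _).trans_eq (by simp_rw [norm_mul])
    _ ≤ √(∫ x, ‖u x - A‖ ^ 2 ∂μ) * √(∫ x, ‖v x - B‖ ^ 2 ∂μ) :=
      integral_mul_le_sqrt_mul_sqrt (fun x => norm_nonneg _) (fun x => norm_nonneg _)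
        (memLp_norm_sub_integral hu hu1 2) (memLp_norm_sub_integral hv hv1 2)
    _ = √((1 - ‖A‖ ^ 2) * (1 - ‖B‖ ^ 2)) := by
      rw [integral_norm_sub_integral_sq hu hu1, integral_norm_sub_integral_sq hv hv1,
        Real.sqrt_mul hvar_nonneg]

end UnimodularIntegral

section CharFun

variable {E : Type*} [NormedAddCommGroup E] [InnerProductSpace ℝ E] [MeasurableSpace E]
  [OpensMeasurableSpace E] {μ : Measure E} [IsProbabilityMeasure μ]

lemma norm_mul_norm_sub_sqrt_le_norm_charFun_add (s t : E) :
    ‖charFun μ s‖ * ‖charFun μ t‖ - √((1 - ‖charFun μ s‖ ^ 2) * (1 - ‖charFun μ t‖ ^ 2))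
      ≤ ‖charFun μ (s + t)‖ := by
  have hmeas : ∀ t : E, AEStronglyMeasurable (fun x : E => exp ((⟪x, t⟫_ℝ : ℂ) * I)) μ :=
    fun t => by fun_prop
  have hnorm : ∀ (t x : E), ‖exp ((⟪x, t⟫_ℝ : ℂ) * I)‖ = 1 := fun t x => by
    rw [Complex.norm_exp_ofReal_mul_I]
  have hcov : ‖charFun μ (s + t) - charFun μ s * charFun μ t‖
      ≤ √((1 - ‖charFun μ s‖ ^ 2) * (1 - ‖charFun μ t‖ ^ 2)) := by
    simpa only [charFun_apply, ← Complex.exp_add, ← add_mul, ← ofReal_add, ← inner_add_right]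
      using norm_integral_mul_sub_le (hmeas s) (hmeas t) (hnorm s) (hnorm t)
  have := norm_sub_norm_le (charFun μ s * charFun μ t) (charFun μ (s + t))
  rw [norm_sub_rev, norm_mul] at this
  linarith

end CharFun

section SqrtSubadditive

variable {E : Type*}

def SqrtSubadditive [Add E] (f : E → ℝ) : Prop :=
  ∀ x y, √(f (x + y)) ≤ √(f x) + √(f y)

namespace SqrtSubadditive

variable {f : E → ℝ}

lemma sum [Add E] {ι : Type*} (s : Finset ι) {f : ι → E → ℝ} (hf0 : ∀ i ∈ s, 0 ≤ f i)
    (hf : ∀ i ∈ s, SqrtSubadditive (f i)) : SqrtSubadditive (∑ i ∈ s, f i) := by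
  intro x y
  have hpt : ∀ i ∈ s, f i (x + y) ≤ (√(f i x) + √(f i y)) ^ 2 := fun i hi =>
    (Real.sqrt_le_iff.mp (hf i hi x y)).2
  have hminkowski := Real.Lp_add_le_of_nonneg s (p := 2) one_le_two
    (f := fun i => √(f i x)) (g := fun i => √(f i y))
    (fun i _ => Real.sqrt_nonneg _) (fun i _ => Real.sqrt_nonneg _)
  simp only [Real.rpow_two, ← Real.sqrt_eq_rpow] at hminkowski
  calc √((∑ i ∈ s, f i) (x + y)) ≤ √(∑ i ∈ s, (√(f i x) + √(f i y)) ^ 2) := by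
        rw [Finset.sum_apply]; exact Real.sqrt_le_sqrt (Finset.sum_le_sum hpt)
    _ ≤ √(∑ i ∈ s, √(f i x) ^ 2) + √(∑ i ∈ s, √(f i y) ^ 2) := hminkowski
    _ = √((∑ i ∈ s, f i) x) + √((∑ i ∈ s, f i) y) := by
        simp only [Finset.sum_apply]
        rw [Finset.sum_congr rfl fun i hi => Real.sq_sqrt (hf0 i hi x),
          Finset.sum_congr rfl fun i hi => Real.sq_sqrt (hf0 i hi y)]

lemma sqrt_apply_nsmul_add_le [AddMonoid E] (hf : SqrtSubadditive f) (m : ℕ) (x y : E) :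
    √(f (m • x + y)) ≤ m * √(f x) + √(f y) := by
  induction m with
  | zero => simp
  | succ m ih =>
    rw [succ_nsmul', add_assoc]
    push_cast
    linarith [hf x (m • x + y)]

lemma apply_nsmul_le [AddMonoid E] (hf : SqrtSubadditive f) (hf0 : 0 ≤ f) (h0 : f 0 = 0)
    (m : ℕ) (x : E) : f (m • x) ≤ m ^ 2 * f x := by
  have := hf.sqrt_apply_nsmul_add_le m x 0
  rw [add_zero, h0, Real.sqrt_zero, add_zero] at this
  rw [← Real.sq_sqrt (hf0 x), ← mul_pow]
  exact (Real.sqrt_le_iff.mp this).2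

lemma sqrt_apply_smul_le [AddCommGroup E] [Module ℝ E] (hf : SqrtSubadditive f) {r : ℝ}
    (hr : 0 ≤ r) (x : E) : √(f (r • x)) ≤ r * √(f x) + √(f ((r - ⌊r⌋₊) • x)) := by
  have hsplit : r • x = ⌊r⌋₊ • x + (r - ⌊r⌋₊) • x := by
    rw [← Nat.cast_smul_eq_nsmul ℝ, ← add_smul, add_sub_cancel]
  calc √(f (r • x)) = √(f (⌊r⌋₊ • x + (r - ⌊r⌋₊) • x)) := by rw [← hsplit]
    _ ≤ ⌊r⌋₊ * √(f x) + √(f ((r - ⌊r⌋₊) • x)) := hf.sqrt_apply_nsmul_add_le _ _ _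
    _ ≤ r * √(f x) + √(f ((r - ⌊r⌋₊) • x)) := by gcongr; exact Nat.floor_le hr

end SqrtSubadditive

end SqrtSubadditive

lemma tendsto_natCast_mul_one_sub_exp_neg_div (x : ℝ) :
    Tendsto (fun n : ℕ => n * (1 - Real.exp (-x / n))) atTop (𝓝 x) := by
  have hbound : ∀ᶠ n : ℕ in atTop, ‖n * (1 - Real.exp (-x / n)) - x‖ ≤ x ^ 2 / n := by
    filter_upwards [eventually_ge_atTop ⌈|x|⌉₊, eventually_gt_atTop 0] with n hxn hn
    have hn' : (0 : ℝ) < n := by exact_mod_cast hn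
    have hsmall : |-x / n| ≤ 1 := by
      rw [abs_div, abs_neg, Nat.abs_cast, div_le_one hn']
      exact (Nat.le_ceil _).trans (by exact_mod_cast hxn)
    have hrewrite : n * (1 - Real.exp (-x / n)) - x
        = -(n * (Real.exp (-x / n) - 1 - -x / n)) := by
      field_simp
      ring
    rw [Real.norm_eq_abs, hrewrite, abs_neg, abs_mul, Nat.abs_cast]
    calc (n : ℝ) * |Real.exp (-x / n) - 1 - -x / n| ≤ n * (-x / n) ^ 2 :=
          mul_le_mul_of_nonneg_left (Real.abs_exp_sub_one_sub_id_le hsmall) hn'.le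
      _ = x ^ 2 / n := by field_simp
  exact tendsto_iff_norm_sub_tendsto_zero.mpr <| squeeze_zero' (.of_forall fun n => norm_nonneg _)
    hbound (tendsto_const_div_atTop_nhds_zero_nat _)

/-- The hypothesis is the covariance inequality for the moduli of the `n`-th convolution roots
of a measure with `‖μ̂‖ = exp (-ψ)`, evaluated at `s`, `t`, `s + t` with `ψ = A, B, X`. -/
lemma le_sq_sqrt_add_sqrt_of_forall {A B X : ℝ} (hA : 0 ≤ A) (hB : 0 ≤ B)
    (h : ∀ n : ℕ, 0 < n → Real.exp (-A / n) * Real.exp (-B / n)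
      - √((1 - Real.exp (-A / n) ^ 2) * (1 - Real.exp (-B / n) ^ 2)) ≤ Real.exp (-X / n)) :
    X ≤ (√A + √B) ^ 2 := by
  set g : ℝ → ℕ → ℝ := fun x n => n * (1 - Real.exp (-x / n))
  have hmul : ∀ᶠ n : ℕ in atTop, g X n ≤ g (A + B) n + √(g (2 * A) n * g (2 * B) n) := by
    filter_upwards [eventually_gt_atTop 0] with n hn
    have hn' : (0 : ℝ) < n := by exact_mod_cast hn
    have hsq : ∀ y : ℝ, Real.exp (-y / n) ^ 2 = Real.exp (-(2 * y) / n) := fun y => by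
      rw [← Real.exp_nat_mul]; ring_nf
    have hprod : Real.exp (-A / n) * Real.exp (-B / n) = Real.exp (-(A + B) / n) := by
      rw [← Real.exp_add]; ring_nf
    have hsqrt : √(g (2 * A) n * g (2 * B) n)
        = n * √((1 - Real.exp (-(2 * A) / n)) * (1 - Real.exp (-(2 * B) / n))) := by
      rw [show g (2 * A) n * g (2 * B) n
          = n ^ 2 * ((1 - Real.exp (-(2 * A) / n)) * (1 - Real.exp (-(2 * B) / n))) by ring,
        Real.sqrt_mul (sq_nonneg _), Real.sqrt_sq hn'.le]
    have := h n hn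
    rw [hsq, hsq, hprod] at this
    simp only [g, hsqrt]
    nlinarith
  have hlim : Tendsto (fun n => g (A + B) n + √(g (2 * A) n * g (2 * B) n)) atTop
      (𝓝 ((A + B) + √(2 * A * (2 * B)))) :=
    (tendsto_natCast_mul_one_sub_exp_neg_div _).add
      (((tendsto_natCast_mul_one_sub_exp_neg_div _).mul
        (tendsto_natCast_mul_one_sub_exp_neg_div _)).sqrt)
  have hle := le_of_tendsto_of_tendsto (tendsto_natCast_mul_one_sub_exp_neg_div X) hlim hmul
  have hsqrt : √(2 * A * (2 * B)) = 2 * √A * √B := by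
    rw [show 2 * A * (2 * B) = 2 ^ 2 * A * B by ring, Real.sqrt_mul (by positivity),
      Real.sqrt_mul (by positivity), Real.sqrt_sq zero_le_two]
  rw [add_sq, Real.sq_sqrt hA, Real.sq_sqrt hB]
  linarith

section InfinitelyDivisible

variable {d : ℕ}

lemma charFn_eq_charFun (μ : Measure (Ed d)) : charFn μ = charFun μ := by
  ext z
  simp only [charFn, charFun_apply, real_inner_comm]

instance isProbabilityMeasure_convPow (ν : Measure (Ed d)) [IsProbabilityMeasure ν] (n : ℕ) :
    IsProbabilityMeasure (convPow ν n) := by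
  induction n with
  | zero => exact Measure.dirac.isProbabilityMeasure
  | succ n ih => exact inferInstanceAs (IsProbabilityMeasure (convPow ν n ∗ ν))

lemma charFun_convPow (ν : Measure (Ed d)) [IsProbabilityMeasure ν] (n : ℕ) (z : Ed d) :
    charFun (convPow ν n) z = charFun ν z ^ n := by
  induction n with
  | zero => simp [convPow, charFun_dirac]
  | succ n ih => rw [convPow, charFun_conv, ih, pow_succ]

lemma cumulant_spec_or_eq_zero (μ : Measure (Ed d)) :
    (Continuous (cumulant μ) ∧ cumulant μ 0 = 0 ∧ ∀ z, charFn μ z = exp (cumulant μ z)) ∨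
      cumulant μ = 0 := by
  rw [cumulant]
  split_ifs with h
  exacts [.inl h.choose_spec, .inr rfl]

/-- Uniqueness of the continuous logarithm, since `exp : ℂ → ℂ \ {0}` is a covering map. -/
lemma cumulant_eq {μ : Measure (Ed d)} {C : Ed d → ℂ} (hC : Continuous C) (hC0 : C 0 = 0)
    (hμ : ∀ z, charFn μ z = exp (C z)) : cumulant μ = C := by
  have hex : ∃ C : Ed d → ℂ, Continuous C ∧ C 0 = 0 ∧ ∀ z, charFn μ z = exp (C z) :=
    ⟨C, hC, hC0, hμ⟩
  rw [cumulant, dif_pos hex]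
  obtain ⟨hcont, hzero, hexp⟩ := hex.choose_spec
  refine Complex.isCoveringMap_exp.eq_of_comp_eq hcont hC (funext fun z => ?_) 0
    (by rw [hzero, hC0])
  simp [← hexp, ← hμ]

/-- `‖μ̂‖ = exp (-negReCumulant μ)` whenever `μ̂` has a continuous logarithm; otherwise
`cumulant μ = 0` and `negReCumulant μ = 0`. -/
noncomputable def negReCumulant (μ : Measure (Ed d)) (w : Ed d) : ℝ := -(cumulant μ w).re

lemma negReCumulant_zero (μ : Measure (Ed d)) : negReCumulant μ 0 = 0 := by
  rcases cumulant_spec_or_eq_zero μ with h | h <;> simp [negReCumulant, h]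

lemma continuous_negReCumulant (μ : Measure (Ed d)) : Continuous (negReCumulant μ) := by
  rcases cumulant_spec_or_eq_zero μ with h | h
  · exact (continuous_re.comp h.1).neg
  · show Continuous fun w => -(cumulant μ w).re
    simp only [h, Pi.zero_apply, zero_re, neg_zero]
    exact continuous_const

lemma norm_charFun_eq_exp_neg_negReCumulant {μ : Measure (Ed d)}
    (h : ∀ z, charFn μ z = exp (cumulant μ z)) (w : Ed d) :
    ‖charFun μ w‖ = Real.exp (-negReCumulant μ w) := by
  rw [← charFn_eq_charFun, h, Complex.norm_exp, negReCumulant, neg_neg]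

lemma negReCumulant_nonneg (μ : Measure (Ed d)) [IsProbabilityMeasure μ] :
    0 ≤ negReCumulant μ := by
  intro w
  rcases cumulant_spec_or_eq_zero μ with h | h
  · have := norm_charFun_le_one (μ := μ) w
    rw [norm_charFun_eq_exp_neg_negReCumulant h.2.2, Real.exp_le_one_iff] at this
    simpa using this
  · simp [negReCumulant, h]

lemma sqrtSubadditive_negReCumulant {μ : Measure (Ed d)} (hμ : μ ∈ IDiv d) :
    SqrtSubadditive (negReCumulant μ) := by
  have := hμ.1
  rcases cumulant_spec_or_eq_zero μ with ⟨-, -, hexp⟩ | h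
  · intro s t
    have hroot : ∀ n : ℕ, 0 < n → ∃ ν : Measure (Ed d), IsProbabilityMeasure ν ∧
        ∀ w, ‖charFun ν w‖ = Real.exp (-negReCumulant μ w / n) := fun n hn => by
      obtain ⟨ν, hν, hνμ⟩ := hμ.2 n hn
      refine ⟨ν, hν, fun w => (pow_left_inj₀ (norm_nonneg _) (Real.exp_nonneg _) hn.ne').mp ?_⟩
      rw [← norm_pow, ← charFun_convPow, hνμ, norm_charFun_eq_exp_neg_negReCumulant hexp,
        ← Real.exp_nat_mul]
      field_simp
    have hle := le_sq_sqrt_add_sqrt_of_forall (negReCumulant_nonneg μ s)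
      (negReCumulant_nonneg μ t) (X := negReCumulant μ (s + t)) fun n hn => by
        obtain ⟨ν, hν, hνw⟩ := hroot n hn
        simpa only [hνw] using norm_mul_norm_sub_sqrt_le_norm_charFun_add (μ := ν) s t
    exact Real.sqrt_le_iff.mpr ⟨by positivity, hle⟩
  · simp [SqrtSubadditive, negReCumulant, h]

end InfinitelyDivisible

lemma tendsto_div_sqrt_of_two_lt {α : ℝ} (hα : 2 < α) {a p : ℕ → ℝ} (ha : ∀ n, 0 < a n)
    (ha_top : Tendsto a atTop atTop) (hpa : Tendsto (fun n => p n / a n ^ α) atTop (𝓝 1)) :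
    Tendsto (fun n => a n / √(p n)) atTop (𝓝 0) := by
  have hpow : Tendsto (fun n => a n ^ (2 - α)) atTop (𝓝 0) := by
    have := (tendsto_rpow_neg_atTop (by linarith : 0 < α - 2)).comp ha_top
    simpa only [Function.comp_def, neg_sub] using this
  have hsq : Tendsto (fun n => a n ^ 2 / p n) atTop (𝓝 0) := by
    have h := hpow.mul (hpa.inv₀ one_ne_zero)
    rw [zero_mul] at h
    refine h.congr fun n => ?_
    rw [Real.rpow_sub (ha n), Real.rpow_two, inv_div]
    field_simp [(Real.rpow_pos_of_pos (ha n) α).ne']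
  have h := hsq.sqrt
  rw [Real.sqrt_zero] at h
  refine h.congr fun n => ?_
  rw [Real.sqrt_div (sq_nonneg _), Real.sqrt_sq (ha n).le]

section Scaling

variable {E : Type*} [NormedAddCommGroup E] [NormedSpace ℝ E]

/-- Write `a_n⁻¹ • w = (a_k / a_n) • (a_k⁻¹ • w)`: subadditivity costs a factor `a_k / a_n`,
while `√(S_k (a_k⁻¹ • w)) = O(1 / √p_k)`, and `a_k / √p_k → 0`. -/
lemma eq_zero_of_tendsto_mul_apply_inv_smul {S : ℕ → E → ℝ} (hS : ∀ n, SqrtSubadditive (S n))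
    (hS0 : ∀ n, 0 ≤ S n) (hmono : Monotone S) (hcont : ∀ n, ContinuousAt (S n) 0)
    (hzero : ∀ n, S n 0 = 0) {a p : ℕ → ℝ} (ha : ∀ n, 0 < a n) (ha_top : Tendsto a atTop atTop)
    (hp : ∀ n, 0 < p n) (hap : Tendsto (fun n => a n / √(p n)) atTop (𝓝 0)) {w : E} {L : ℝ}
    (hL : Tendsto (fun k => p k * S k ((a k)⁻¹ • w)) atTop (𝓝 L)) (n : ℕ) :
    S n ((a n)⁻¹ • w) = 0 := by
  set θ : ℕ → ℝ := fun k => (a k / a n - ⌊a k / a n⌋₊) * (a k)⁻¹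
  have hbound : ∀ k ≥ n, √(S n ((a n)⁻¹ • w))
      ≤ (a n)⁻¹ * (a k / √(p k) * √(p k * S k ((a k)⁻¹ • w))) + √(S n (θ k • w)) := by
    intro k hk
    have h := (hS n).sqrt_apply_smul_le (div_nonneg (ha k).le (ha n).le) ((a k)⁻¹ • w)
    have hr : a k / a n * (a k)⁻¹ = (a n)⁻¹ := by field_simp [(ha k).ne']
    rw [smul_smul, smul_smul, hr] at h
    refine h.trans (add_le_add_left ?_ _)
    calc a k / a n * √(S n ((a k)⁻¹ • w)) ≤ a k / a n * √(S k ((a k)⁻¹ • w)) := by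
          gcongr
          · exact div_nonneg (ha k).le (ha n).le
          · exact hmono hk _
      _ = (a n)⁻¹ * (a k / √(p k) * √(p k * S k ((a k)⁻¹ • w))) := by
          rw [Real.sqrt_mul (hp k).le]
          field_simp [(Real.sqrt_pos.mpr (hp k)).ne']
  have hθ : Tendsto θ atTop (𝓝 0) := by
    refine squeeze_zero (fun k => ?_) (fun k => ?_) (tendsto_inv_atTop_zero.comp ha_top)
    · exact mul_nonneg (sub_nonneg.mpr (Nat.floor_le (div_nonneg (ha k).le (ha n).le)))
        (inv_nonneg.mpr (ha k).le)
    · refine mul_le_of_le_one_left (inv_nonneg.mpr (ha k).le) ?_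
      linarith [Nat.lt_floor_add_one (a k / a n)]
  have hrhs : Tendsto (fun k => (a n)⁻¹ * (a k / √(p k) * √(p k * S k ((a k)⁻¹ • w)))
      + √(S n (θ k • w))) atTop (𝓝 0) := by
    have h1 := (hap.mul hL.sqrt).const_mul (a n)⁻¹
    have h2 := ((hcont n).tendsto.comp (by simpa using hθ.smul_const w)).sqrt
    simpa [hzero] using h1.add h2
  have hle : √(S n ((a n)⁻¹ • w)) ≤ 0 := ge_of_tendsto hrhs (eventually_atTop.mpr ⟨n, hbound⟩)
  exact le_antisymm (Real.sqrt_eq_zero'.mp (le_antisymm hle (Real.sqrt_nonneg _))) (hS0 n _)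

lemma ne_zero_of_tendsto_exp_neg {T : ℕ → E → ℝ}
    (hT : ∀ n (m : ℕ) v, T n (m • v) ≤ m ^ 2 * T n v) {φ : E → ℂ} (hφ : ContinuousAt φ 0)
    (hφ0 : φ 0 = 1) (hlim : ∀ z, Tendsto (fun n => Real.exp (-T n z)) atTop (𝓝 ‖φ z‖))
    (z : E) : φ z ≠ 0 := by
  have hsmall : ∀ᶠ m : ℕ in atTop, φ ((m : ℝ)⁻¹ • z) ≠ 0 := by
    have hto0 : Tendsto (fun m : ℕ => (m : ℝ)⁻¹ • z) atTop (𝓝 0) := by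
      simpa using (tendsto_inv_atTop_zero.comp (tendsto_natCast_atTop_atTop (R := ℝ))).smul_const z
    exact (hφ.tendsto.comp hto0).eventually_ne (by rw [hφ0]; exact one_ne_zero)
  obtain ⟨m, hm, hm0⟩ := (hsmall.and (eventually_gt_atTop 0)).exists
  have hz : z = m • ((m : ℝ)⁻¹ • z) := by
    rw [← Nat.cast_smul_eq_nsmul ℝ, smul_smul, mul_inv_cancel₀ (by positivity), one_smul]
  have hineq : ∀ n, Real.exp (-T n ((m : ℝ)⁻¹ • z)) ^ (m ^ 2) ≤ Real.exp (-T n z) := fun n => by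
    rw [← Real.exp_nat_mul, Real.exp_le_exp]
    push_cast
    have := hT n m ((m : ℝ)⁻¹ • z)
    rw [← hz] at this
    linarith
  have hle := le_of_tendsto_of_tendsto' ((hlim _).pow (m ^ 2)) (hlim z) hineq
  exact norm_pos_iff.mp ((pow_pos (norm_pos_iff.mpr hm) _).trans_le hle)

end Scaling

lemma exists_eq_dirac_of_conv_eq_dirac {G : Type*} [AddCommGroup G] [MeasurableSpace G]
    [MeasurableAdd₂ G] [MeasurableSingletonClass G] {μ ν : Measure G} [IsProbabilityMeasure μ]
    [IsProbabilityMeasure ν] {c : G} (h : μ ∗ ν = Measure.dirac c) :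
    ∃ γ, ν = Measure.dirac γ := by
  have hconv : ∀ᵐ z ∂(μ ∗ ν), z = c := by
    rw [h]
    exact (ae_dirac_iff (measurableSet_singleton c)).mpr rfl
  have hprod : ∀ᵐ q ∂(μ.prod ν), q.1 + q.2 = c := ae_of_ae_map (by fun_prop) hconv
  obtain ⟨x, hx⟩ := (Measure.ae_ae_of_ae_prod hprod).exists
  refine ⟨c - x, ?_⟩
  have hν : (id : G → G) =ᵐ[ν] fun _ => c - x := hx.mono fun y hy => by
    rw [← hy]; simp
  simpa using (ProbabilityTheory.hasLaw_dirac_of_ae_eq hν).map_eq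

lemma exists_eq_dirac_of_norm_charFun_eq_one {E : Type*} [NormedAddCommGroup E]
    [InnerProductSpace ℝ E] [CompleteSpace E] [SecondCountableTopology E] [MeasurableSpace E]
    [BorelSpace E] {μ : Measure E} [IsProbabilityMeasure μ] (h : ∀ z, ‖charFun μ z‖ = 1) :
    ∃ γ, μ = Measure.dirac γ := by
  have := Measure.isProbabilityMeasure_map (μ := μ) (f := fun x => (-1 : ℝ) • x) (by fun_prop)
  refine exists_eq_dirac_of_conv_eq_dirac (μ := μ.map fun x => (-1 : ℝ) • x) (c := 0)
    (Measure.ext_of_charFun (funext fun z => ?_))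
  rw [charFun_conv, charFun_map_smul, neg_one_smul, charFun_neg, charFun_dirac, inner_zero_left,
    ofReal_zero, zero_mul, Complex.exp_zero, Complex.conj_mul', h, ofReal_one, one_pow]

section QOp

variable {d : ℕ}

lemma norm_prod_exp_mul_cumulant_mul_exp (μs : ℕ → Measure (Ed d)) (n : ℕ) (t r : ℝ)
    (v : Ed d) :
    ‖(∏ j ∈ Finset.range n, exp (t * cumulant (μs j) v)) * exp (r * I)‖
      = Real.exp (-(t * ∑ j ∈ Finset.range n, negReCumulant (μs j) v)) := by
  rw [norm_mul, Complex.norm_exp_ofReal_mul_I, mul_one, norm_prod]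
  simp_rw [Complex.norm_exp, re_ofReal_mul]
  rw [← Real.exp_sum, Finset.mul_sum, ← Finset.sum_neg_distrib]
  simp [negReCumulant]

lemma norm_charFun_eq_one_of_mem_QOp {α : ℝ} (hα : 2 < α) {H : Set (Measure (Ed d))}
    {μ : Measure (Ed d)} (hμ : μ ∈ QOp α H) (z : Ed d) : ‖charFun μ z‖ = 1 := by
  obtain ⟨hprob, μs, -, a, p, c, hID, -, ha, -, ha_top, -, hp, hpa, hconv⟩ := hμ
  have := fun j => (hID j).1
  set S : ℕ → Ed d → ℝ := fun n => ∑ j ∈ Finset.range n, negReCumulant (μs j)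
  have hS0 : ∀ n, 0 ≤ S n := fun n =>
    Finset.sum_nonneg fun j _ => negReCumulant_nonneg (μs j)
  have hS : ∀ n, SqrtSubadditive (S n) := fun n =>
    .sum _ (fun j _ => negReCumulant_nonneg (μs j))
      (fun j _ => sqrtSubadditive_negReCumulant (hID j))
  have hmono : Monotone S := fun n m hnm w => by
    simp only [S, Finset.sum_apply]
    exact Finset.sum_le_sum_of_subset_of_nonneg (Finset.range_subset_range.mpr hnm)
      fun j _ _ => negReCumulant_nonneg (μs j) w
  have hlim : ∀ z, Tendsto (fun n => Real.exp (-(p n * S n ((a n)⁻¹ • z)))) atTop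
      (𝓝 ‖charFun μ z‖) := fun z => by
    rw [← charFn_eq_charFun]
    refine (hconv z).norm.congr fun n => ?_
    rw [norm_prod_exp_mul_cumulant_mul_exp]
    simp only [S, Finset.sum_apply]
  have hne : charFun μ z ≠ 0 := by
    refine ne_zero_of_tendsto_exp_neg (fun n m v => ?_) (continuous_charFun.continuousAt)
      (by simp [charFun_zero]) hlim z
    rw [smul_comm, mul_left_comm]
    exact mul_le_mul_of_nonneg_left ((hS n).apply_nsmul_le (hS0 n)
      (by simp [S, negReCumulant_zero]) m _) (hp n).le
  have hT : Tendsto (fun n => p n * S n ((a n)⁻¹ • z)) atTop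
      (𝓝 (-Real.log ‖charFun μ z‖)) := by
    have := ((Real.continuousAt_log (norm_ne_zero_iff.mpr hne)).tendsto.comp (hlim z)).neg
    simpa [Function.comp_def] using this
  have hzero := eq_zero_of_tendsto_mul_apply_inv_smul hS hS0 hmono
    (fun n => by
      simpa only [S, Finset.sum_fn] using
        (continuous_finsetSum _ fun j _ => continuous_negReCumulant (μs j)).continuousAt)
    (fun n => by simp [S, negReCumulant_zero]) ha ha_top hp
    (tendsto_div_sqrt_of_two_lt hα ha ha_top hpa) hT
  refine tendsto_nhds_unique (hlim z) ?_
  simp [hzero]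

end QOp

section Dirac

variable {d : ℕ}

lemma dirac_zero_mem_IDiv : Measure.dirac (0 : Ed d) ∈ IDiv d := by
  have hpow : ∀ n, convPow (Measure.dirac (0 : Ed d)) n = Measure.dirac 0 := fun n => by
    induction n with
    | zero => rfl
    | succ n ih => rw [convPow, ih, Measure.dirac_zero_conv]
  exact ⟨inferInstance, fun n _ => ⟨_, inferInstance, hpow n⟩⟩

lemma cumulant_dirac_zero : cumulant (Measure.dirac (0 : Ed d)) = 0 :=
  cumulant_eq continuous_const rfl fun z => by simp [charFn_eq_charFun, charFun_dirac]

lemma weakTendsto_map_inv_succ_smul (μ : Measure (Ed d)) [IsProbabilityMeasure μ] :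
    WeakTendsto (fun k : ℕ => μ.map fun x => ((k : ℝ) + 1)⁻¹ • x + 0) (Measure.dirac 0) := by
  intro f
  simp only [add_zero]
  rw [integral_dirac]
  have hscale : Tendsto (fun k : ℕ => ((k : ℝ) + 1)⁻¹) atTop (𝓝 0) := by
    simpa using tendsto_one_div_add_atTop_nhds_zero_nat (𝕜 := ℝ)
  have hdom : Tendsto (fun k : ℕ => ∫ x, f (((k : ℝ) + 1)⁻¹ • x) ∂μ) atTop (𝓝 (∫ _, f 0 ∂μ)) :=
    tendsto_integral_of_dominated_convergence (fun _ => ‖f‖) (fun k => by fun_prop)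
      (integrable_const _) (fun k => .of_forall fun x => f.norm_coe_le_norm _)
      (.of_forall fun x => (f.continuous.tendsto 0).comp (by simpa using hscale.smul_const x))
  simp only [integral_const, probReal_univ, one_smul] at hdom
  refine hdom.congr fun k => (integral_map (by fun_prop) (by fun_prop)).symm

lemma dirac_zero_mem_of_isCCSS {H : Set (Measure (Ed d))} (hne : H.Nonempty) (hHI : H ⊆ IDiv d)
    (hH : IsCCSS H) : Measure.dirac (0 : Ed d) ∈ H := by
  obtain ⟨μ, hμ⟩ := hne
  have := (hHI hμ).1
  exact hH.2.1 _ _ (fun k => hH.2.2.1 μ hμ _ (by positivity) 0) inferInstance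
    (weakTendsto_map_inv_succ_smul μ)

lemma dirac_mem_QOp (α : ℝ) {H : Set (Measure (Ed d))} (h0 : Measure.dirac 0 ∈ H) (γ : Ed d) :
    Measure.dirac γ ∈ QOp α H := by
  refine ⟨inferInstance, fun _ => Measure.dirac 0, 0, fun n => n + 1, fun n => (n + 1) ^ α,
    fun _ => γ, fun _ => dirac_zero_mem_IDiv, fun _ _ => h0, fun n => by positivity,
    fun m n hmn => by simpa using hmn,
    tendsto_atTop_add_const_right _ 1 tendsto_natCast_atTop_atTop, ?_, fun n => by positivity, ?_, fun z => ?_⟩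
  · have := tendsto_add_mul_div_add_mul_atTop_nhds (2 : ℝ) 1 1 one_ne_zero
    rw [div_one] at this
    refine this.congr fun n => ?_
    push_cast
    ring
  · exact tendsto_const_nhds.congr fun n => (div_self (by positivity)).symm
  · simp [cumulant_dirac_zero, charFn_eq_charFun, charFun_dirac]

end Dirac

theorem stmt_3_general (d : ℕ) (α : ℝ) (hα : 2 < α)
    (H : Set (Measure (Ed d))) (hne : H.Nonempty) (hHI : H ⊆ IDiv d) (hH : IsCCSS H) :
    QOp α H = {μ : Measure (Ed d) | ∃ γ : Ed d, μ = Measure.dirac γ} := by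
  ext μ
  refine ⟨fun hμ => ?_, ?_⟩
  · have := hμ.1
    exact exists_eq_dirac_of_norm_charFun_eq_one (norm_charFun_eq_one_of_mem_QOp hα hμ)
  · rintro ⟨γ, rfl⟩
    exact dirac_mem_QOp α (dirac_zero_mem_of_isCCSS hne hHI hH) γ

/-- for α > 2 and nonempty c.c.s.s. H, 𝔔_α(H) is the class of Dirac measures. -/
theorem stmt_3 (d : ℕ) (hd : 1 ≤ d) (α : ℝ) (hα : 2 < α)
    (H : Set (Measure (Ed d))) (hne : H.Nonempty) (hHI : H ⊆ IDiv d) (hH : IsCCSS H) :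
    QOp α H = {μ : Measure (Ed d) | ∃ γ : Ed d, μ = Measure.dirac γ} :=
  stmt_3_general d α hα H hne hHI hH
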